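/- arXiv:1606.01840 — 2 statements merged into one kernel-verified Lean document; each statement's English description precedes it below -/
import Mathlib

section
/- For every integer N ≥ 2, every p ∈ [0,1), and all integers 1 ≤ n < m with m ≤ (N+1)/2, the steady-state location probabilities are monotone toward the center: f_x(n) ≤ f_x(m), where f_x(n) = p/N + (1−p)·(3N(2n−1) − 6n(n−1) − 3)/(N(N²−1)). In particular the user density is highest at the center of the lattice and lowest at the boundaries. -/
/-- For N ≥ 2, p ∈ [0,1), and integers 1 ≤ n < m with
m ≤ (N+1)/2, the steady-state location probabilities are monotone toward
the center: f_x(n) ≤ f_x(m). -/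
theorem rwpm_steady_state_monotone (N n m : ℕ) (hN : 2 ≤ N) (p : ℝ)
    (hp0 : 0 ≤ p) (hp1 : p < 1)
    (hn1 : 1 ≤ n) (hnm : n < m) (hm : (m : ℝ) ≤ ((N : ℝ) + 1) / 2) :
    p / N + (1 - p) * (3 * N * (2 * (n : ℝ) - 1) - 6 * n * ((n : ℝ) - 1) - 3)
        / (N * ((N : ℝ) ^ 2 - 1))
    ≤ p / N + (1 - p) * (3 * N * (2 * (m : ℝ) - 1) - 6 * m * ((m : ℝ) - 1) - 3)
        / (N * ((N : ℝ) ^ 2 - 1)) := by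
  have hNR : (2 : ℝ) ≤ (N : ℝ) := by exact_mod_cast hN
  have hd : (0 : ℝ) < (N : ℝ) * ((N : ℝ) ^ 2 - 1) := by nlinarith
  have h1p : (0 : ℝ) ≤ 1 - p := by linarith
  have hnmR : (n : ℝ) + 1 ≤ (m : ℝ) := by exact_mod_cast hnm
  have hnR : (1 : ℝ) ≤ (n : ℝ) := by exact_mod_cast hn1
  have key : (3 * N * (2 * (n : ℝ) - 1) - 6 * n * ((n : ℝ) - 1) - 3)
      ≤ (3 * N * (2 * (m : ℝ) - 1) - 6 * m * ((m : ℝ) - 1) - 3) := by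
    nlinarith [mul_nonneg ((by linarith : (0:ℝ) ≤ (m:ℝ) - (n:ℝ))) (by linarith : (0:ℝ) ≤ (N:ℝ) - ((m:ℝ) + (n:ℝ) - 1))]
  gcongr
end

section
/- Let γ > 0 and let n ≥ 1 be an integer. Let μ be the uniform probability measure on the interval (0, γ] (i.e., γ⁻¹ times Lebesgue measure restricted to (0, γ]). Then the pushforward of the n-fold product measure μ^{⊗n} under the map (x₁,…,xₙ) ↦ ∏_{i=1}^n xᵢ is absolutely continuous with respect to Lebesgue measure on ℝ, with density h(x) = (1/(γⁿ (n−1)!)) · (log(γⁿ/x))^{n−1} for x ∈ (0, γⁿ) and h(x) = 0 otherwise. -/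
open MeasureTheory

section Aux
open Set ENNReal


lemma A1 (f : ℝ → ℝ≥0∞) (hf : Measurable f) {y : ℝ} (hy : 0 < y)
    {s : Set ℝ} (hs : MeasurableSet s) :
    (volume.withDensity f) {u : ℝ | y * u ∈ s} = ∫⁻ x in s, f (x / y) * (ENNReal.ofReal y)⁻¹ := by
  have hy' : y ≠ 0 := ne_of_gt hy
  have hG : Measurable (s.indicator (fun x => f (x / y))) :=
    (hf.comp (measurable_id.div_const y)).indicator hs
  have hset : MeasurableSet {u : ℝ | y * u ∈ s} := (measurable_const_mul y) hs
  rw [withDensity_apply _ hset, ← lintegral_indicator hset _]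
  have h1 : ∀ u : ℝ, ({u : ℝ | y * u ∈ s}).indicator f u
      = s.indicator (fun x => f (x / y)) (y * u) := by
    intro u
    by_cases hu : y * u ∈ s
    · rw [Set.indicator_of_mem (show u ∈ {u : ℝ | y * u ∈ s} from hu),
        Set.indicator_of_mem hu]
      congr 1
      field_simp
    · rw [Set.indicator_of_notMem (show u ∉ {u : ℝ | y * u ∈ s} from hu),
        Set.indicator_of_notMem hu]
  simp_rw [h1]
  calc ∫⁻ u, s.indicator (fun x => f (x / y)) (y * u)
      = ∫⁻ x, s.indicator (fun x => f (x / y)) x ∂(Measure.map (y * ·) volume) :=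
        (lintegral_map hG (measurable_const_mul y)).symm
    _ = ENNReal.ofReal |y⁻¹| * ∫⁻ x, s.indicator (fun x => f (x / y)) x := by
        rw [Real.map_volume_mul_left hy', lintegral_smul_measure, smul_eq_mul]
    _ = (ENNReal.ofReal y)⁻¹ * ∫⁻ x in s, f (x / y) := by
        rw [abs_of_pos (inv_pos.mpr hy), ENNReal.ofReal_inv_of_pos hy,
          lintegral_indicator hs _]
    _ = ∫⁻ x in s, (ENNReal.ofReal y)⁻¹ * f (x / y) :=
        (lintegral_const_mul _ (show Measurable fun x : ℝ => f (x / y) from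
          hf.comp (measurable_id.div_const y))).symm
    _ = ∫⁻ x in s, f (x / y) * (ENNReal.ofReal y)⁻¹ := by simp_rw [mul_comm]

lemma Auniform (γ : ℝ) (hγ : 0 < γ) (f : ℝ → ℝ≥0∞) (hf : Measurable f) :
    Measure.map (fun p : ℝ × ℝ => p.1 * p.2)
      (((ENNReal.ofReal γ)⁻¹ • volume.restrict (Set.Ioc 0 γ)).prod (volume.withDensity f))
    = volume.withDensity (fun x => (ENNReal.ofReal γ)⁻¹ *
        ∫⁻ y in Set.Ioc 0 γ, f (x / y) * (ENNReal.ofReal y)⁻¹) := by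
  set c : ℝ≥0∞ := (ENNReal.ofReal γ)⁻¹ with hc
  have hcne : c ≠ ⊤ := by
    simp [hc, ENNReal.inv_ne_top, ENNReal.ofReal_pos.mpr hγ, (ENNReal.ofReal_pos.mpr hγ).ne']
  ext s hs
  rw [Measure.map_apply (show Measurable (fun p : ℝ × ℝ => p.1 * p.2) from measurable_fst.mul measurable_snd) hs,
    Measure.prod_apply ((show Measurable (fun p : ℝ × ℝ => p.1 * p.2) from measurable_fst.mul measurable_snd) hs),
    withDensity_apply _ hs]
  have key : ∫⁻ y, (volume.withDensity f)
        (Prod.mk y ⁻¹' ((fun p : ℝ × ℝ => p.1 * p.2) ⁻¹' s))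
        ∂(c • volume.restrict (Set.Ioc 0 γ))
      = c * ∫⁻ y in Set.Ioc 0 γ, ∫⁻ x in s, f (x / y) * (ENNReal.ofReal y)⁻¹ := by
    rw [lintegral_smul_measure]
    congr 1
    refine setLIntegral_congr_fun measurableSet_Ioc ?_
    intro y hy
    have : (Prod.mk y ⁻¹' ((fun p : ℝ × ℝ => p.1 * p.2) ⁻¹' s)) = {u : ℝ | y * u ∈ s} := rfl
    beta_reduce
    rw [this, A1 f hf hy.1 hs]
  rw [key]
  have swap : ∫⁻ y in Set.Ioc 0 γ, ∫⁻ x in s, f (x / y) * (ENNReal.ofReal y)⁻¹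
      = ∫⁻ x in s, ∫⁻ y in Set.Ioc 0 γ, f (x / y) * (ENNReal.ofReal y)⁻¹ := by
    refine lintegral_lintegral_swap ?_
    exact ((hf.comp (measurable_snd.div measurable_fst)).mul
      ((ENNReal.measurable_ofReal.comp measurable_fst).inv)).aemeasurable
  rw [swap, ← lintegral_const_mul' c _ hcne]

lemma ftc (γ x : ℝ) (hγ : 0 < γ) (n : ℕ) (hn : 1 ≤ n) (hx : 0 < x)
    (hx2 : x < γ ^ (n + 1)) :
    ∫ y in (x / γ ^ n)..γ, (Real.log (γ ^ n * y / x)) ^ (n - 1) / y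
      = (Real.log (γ ^ (n + 1) / x)) ^ n / n := by
  have hγn : (0:ℝ) < γ ^ n := pow_pos hγ n
  have ha : 0 < x / γ ^ n := div_pos hx hγn
  have haγ : x / γ ^ n < γ := by
    rw [div_lt_iff₀ hγn]
    calc x < γ ^ (n+1) := hx2
    _ = γ * γ ^ n := by ring
  have huIcc : Set.uIcc (x / γ ^ n) γ = Set.Icc (x / γ ^ n) γ := Set.uIcc_of_le haγ.le
  have key : ∀ y ∈ Set.uIcc (x / γ ^ n) γ,
      HasDerivAt (fun y => (Real.log (γ ^ n * y / x)) ^ n / n)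
        ((Real.log (γ ^ n * y / x)) ^ (n - 1) / y) y := by
    intro y hy
    rw [huIcc] at hy
    have hy0 : 0 < y := lt_of_lt_of_le ha hy.1
    have hz : 0 < γ ^ n * y / x := div_pos (mul_pos hγn hy0) hx
    have h1 : HasDerivAt (fun y : ℝ => γ ^ n * y / x) (γ ^ n / x) y := by
      simpa using ((hasDerivAt_id y).const_mul (γ ^ n)).div_const x
    have h3 : HasDerivAt (fun y : ℝ => Real.log (γ ^ n * y / x))
        ((γ ^ n * y / x)⁻¹ * (γ ^ n / x)) y :=
      by have := (Real.hasDerivAt_log hz.ne').comp y h1; exact this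
    have h4 : HasDerivAt (fun y => (Real.log (γ ^ n * y / x)) ^ n / n)
        (↑n * Real.log (γ ^ n * y / x) ^ (n - 1) * ((γ ^ n * y / x)⁻¹ * (γ ^ n / x)) / ↑n) y :=
      (h3.pow n).div_const (n : ℝ)
    convert h4 using 1
    have hne : (n:ℝ) ≠ 0 := Nat.cast_ne_zero.mpr (by omega)
    have hy0' := hy0.ne'
    have hx' := hx.ne'
    have hγn' := hγn.ne'
    field_simp
  have hcont : IntervalIntegrable (fun y => (Real.log (γ ^ n * y / x)) ^ (n - 1) / y)
      volume (x / γ ^ n) γ := by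
    apply ContinuousOn.intervalIntegrable
    apply continuousOn_of_forall_continuousAt
    intro y hy
    rw [huIcc] at hy
    have hy0 : 0 < y := lt_of_lt_of_le ha hy.1
    have hz : 0 < γ ^ n * y / x := div_pos (mul_pos hγn hy0) hx
    have hin : ContinuousAt (fun y : ℝ => γ ^ n * y / x) y :=
      (continuousAt_const.mul continuousAt_id).div_const x
    have hlog : ContinuousAt (fun y : ℝ => Real.log (γ ^ n * y / x)) y :=
      hin.log hz.ne'
    exact (hlog.pow (n - 1)).div continuousAt_id hy0.ne'
  rw [intervalIntegral.integral_eq_sub_of_hasDerivAt key hcont]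
  have e1 : γ ^ n * γ / x = γ ^ (n+1) / x := by ring
  have e2 : γ ^ n * (x / γ ^ n) / x = 1 := by field_simp
  rw [e1, e2, Real.log_one, zero_pow (by omega : n ≠ 0), zero_div, sub_zero]

noncomputable def Hd (γ : ℝ) (m : ℕ) (x : ℝ) : ℝ :=
  if x ∈ Set.Ioo 0 (γ ^ m) then
    (1 / (γ ^ m * (Nat.factorial (m - 1) : ℝ))) * (Real.log (γ ^ m / x)) ^ (m - 1)
  else 0

lemma Hd_measurable (γ : ℝ) (m : ℕ) : Measurable (Hd γ m) := by
  unfold Hd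
  exact Measurable.ite measurableSet_Ioo
    (measurable_const.mul
      ((Real.measurable_log.comp (measurable_const.div measurable_id)).pow_const _))
    measurable_const

lemma densityId (γ : ℝ) (hγ : 0 < γ) (n : ℕ) (hn : 1 ≤ n) (x : ℝ) :
    (ENNReal.ofReal γ)⁻¹ *
      ∫⁻ y in Set.Ioc 0 γ, ENNReal.ofReal (Hd γ n (x / y)) * (ENNReal.ofReal y)⁻¹
    = ENNReal.ofReal (Hd γ (n + 1) x) := by
  have hγn : (0:ℝ) < γ ^ n := pow_pos hγ n
  by_cases hx : x ∈ Set.Ioo 0 (γ ^ (n+1))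
  · obtain ⟨hx0, hx1⟩ := hx
    have ha : 0 < x / γ ^ n := div_pos hx0 hγn
    have haγ : x / γ ^ n < γ := by
      rw [div_lt_iff₀ hγn]
      calc x < γ ^ (n+1) := hx1
      _ = γ * γ ^ n := by ring
    set cn : ℝ := 1 / (γ ^ n * (Nat.factorial (n - 1) : ℝ)) with hcn
    have hcn0 : 0 ≤ cn := by positivity
    set g : ℝ → ℝ := fun y => cn * (Real.log (γ ^ n * y / x)) ^ (n - 1) / y with hg
    have step1 : ∀ y ∈ Set.Ioc 0 γ,
        ENNReal.ofReal (Hd γ n (x / y)) * (ENNReal.ofReal y)⁻¹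
        = ENNReal.ofReal ((Set.Ioc (x / γ ^ n) γ).indicator g y) := by
      intro y hy
      by_cases hmem : y ∈ Set.Ioc (x / γ ^ n) γ
      · rw [Set.indicator_of_mem hmem]
        have hxyn : x / y < γ ^ n := by
          rw [div_lt_iff₀ hy.1]
          have := (div_lt_iff₀ hγn).mp hmem.1
          linarith
        have h1 : x / y ∈ Set.Ioo 0 (γ ^ n) := ⟨div_pos hx0 hy.1, hxyn⟩
        unfold Hd
        rw [if_pos h1]
        have hlog : γ ^ n / (x / y) = γ ^ n * y / x := by
          field_simp
        rw [hlog, hg, hcn]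
        rw [ENNReal.ofReal_div_of_pos hy.1]
        rw [div_eq_mul_inv (ENNReal.ofReal _) (ENNReal.ofReal y)]
      · rw [Set.indicator_of_notMem hmem]
        have hyle : y ≤ x / γ ^ n := by
          by_contra hcon
          exact hmem ⟨lt_of_not_ge hcon, hy.2⟩
        have hHd : Hd γ n (x / y) = 0 := by
          unfold Hd
          rw [if_neg]
          rintro ⟨h1, h2⟩
          have h3 : γ ^ n * y ≤ x := by
            have := mul_le_mul_of_nonneg_left hyle hγn.le
            rwa [mul_div_cancel₀ _ hγn.ne'] at this
          rw [div_lt_iff₀ hy.1] at h2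
          linarith
        rw [hHd]
        simp
    rw [setLIntegral_congr_fun measurableSet_Ioc step1]
    have step2 : ∫⁻ y in Set.Ioc 0 γ,
        ENNReal.ofReal ((Set.Ioc (x / γ ^ n) γ).indicator g y)
        = ∫⁻ y in Set.Ioc (x / γ ^ n) γ, ENNReal.ofReal (g y) := by
      have hpt : ∀ y : ℝ, ENNReal.ofReal ((Set.Ioc (x / γ ^ n) γ).indicator g y)
          = (Set.Ioc (x / γ ^ n) γ).indicator (fun y => ENNReal.ofReal (g y)) y := by
        intro y
        by_cases hm : y ∈ Set.Ioc (x / γ ^ n) γ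
        · rw [Set.indicator_of_mem hm, Set.indicator_of_mem hm]
        · rw [Set.indicator_of_notMem hm, Set.indicator_of_notMem hm, ENNReal.ofReal_zero]
      simp_rw [hpt]
      rw [lintegral_indicator measurableSet_Ioc, Measure.restrict_restrict measurableSet_Ioc,
        Set.inter_eq_self_of_subset_left (Set.Ioc_subset_Ioc_left ha.le)]
    rw [step2]
    have hnn : 0 ≤ᵐ[volume.restrict (Set.Ioc (x / γ ^ n) γ)] g := by
      refine (ae_restrict_iff' measurableSet_Ioc).mpr (Filter.Eventually.of_forall ?_)
      intro y hy
      have hy0 : 0 < y := lt_trans ha hy.1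
      have hz1 : 1 ≤ γ ^ n * y / x := by
        rw [le_div_iff₀ hx0]
        have := (div_lt_iff₀ hγn).mp hy.1
        nlinarith
      have : 0 ≤ Real.log (γ ^ n * y / x) := Real.log_nonneg hz1
      rw [hg]
      positivity
    have hInt : IntegrableOn g (Set.Ioc (x / γ ^ n) γ) volume := by
      have hcont : ContinuousOn g (Set.Icc (x / γ ^ n) γ) := by
        refine continuousOn_of_forall_continuousAt ?_
        intro y hy
        have hy0 : 0 < y := lt_of_lt_of_le ha hy.1
        have hz : 0 < γ ^ n * y / x := div_pos (mul_pos hγn hy0) hx0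
        have hin : ContinuousAt (fun y : ℝ => γ ^ n * y / x) y :=
          (continuousAt_const.mul continuousAt_id).div_const x
        exact ((continuousAt_const.mul ((hin.log hz.ne').pow (n - 1))).div
          continuousAt_id hy0.ne')
      exact (hcont.integrableOn_Icc).mono_set Set.Ioc_subset_Icc_self
    rw [← ofReal_integral_eq_lintegral_ofReal hInt hnn]
    have step3 : ∫ y in Set.Ioc (x / γ ^ n) γ, g y
        = cn * ((Real.log (γ ^ (n+1) / x)) ^ n / n) := by
      rw [← intervalIntegral.integral_of_le haγ.le]
      have hgy : ∀ y : ℝ, g y = cn * ((Real.log (γ ^ n * y / x)) ^ (n - 1) / y) :=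
        fun y => mul_div_assoc _ _ _
      simp_rw [hgy]
      rw [intervalIntegral.integral_const_mul, ftc γ x hγ n hn hx0 hx1]
    rw [step3]
    unfold Hd
    rw [if_pos (show x ∈ Set.Ioo 0 (γ ^ (n+1)) from ⟨hx0, hx1⟩)]
    rw [← ENNReal.ofReal_inv_of_pos hγ,
      ← ENNReal.ofReal_mul (by positivity : (0:ℝ) ≤ γ⁻¹)]
    congr 1
    have hfact : ((n : ℝ)) * ((Nat.factorial (n - 1) : ℝ)) = (Nat.factorial n : ℝ) := by
      exact_mod_cast Nat.mul_factorial_pred (by omega)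
    have hne : (n:ℝ) ≠ 0 := Nat.cast_ne_zero.mpr (by omega)
    have hfne : ((Nat.factorial (n-1) : ℝ)) ≠ 0 := by
      exact_mod_cast (Nat.factorial_pos (n-1)).ne'
    simp only [Nat.add_sub_cancel, hcn]
    rw [← hfact]
    field_simp
    ring
  · have hz : ∀ y ∈ Set.Ioc 0 γ,
        ENNReal.ofReal (Hd γ n (x / y)) * (ENNReal.ofReal y)⁻¹ = 0 := by
      intro y hy
      have hHd : Hd γ n (x / y) = 0 := by
        unfold Hd
        rw [if_neg]
        rintro ⟨h1, h2⟩
        apply hx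
        have hx0 : 0 < x := by
          rcases div_pos_iff.mp h1 with ⟨h, _⟩ | ⟨_, h⟩
          · exact h
          · linarith [hy.1]
        constructor
        · exact hx0
        · rw [div_lt_iff₀ hy.1] at h2
          have : γ ^ n * y ≤ γ ^ n * γ := mul_le_mul_of_nonneg_left hy.2 hγn.le
          calc x < γ ^ n * y := h2
          _ ≤ γ ^ n * γ := this
          _ = γ ^ (n+1) := by ring
      rw [hHd]
      simp
    rw [setLIntegral_congr_fun measurableSet_Ioc hz]
    have hHd2 : Hd γ (n+1) x = 0 := by
      unfold Hd
      rw [if_neg hx]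
    rw [hHd2]
    simp

lemma mainInd (γ : ℝ) (hγ : 0 < γ) (n : ℕ) (hn : 1 ≤ n) :
    Measure.map (fun x : Fin n → ℝ => ∏ i, x i)
      (Measure.pi fun _ => (ENNReal.ofReal γ)⁻¹ • volume.restrict (Set.Ioc 0 γ))
    = volume.withDensity fun x => ENNReal.ofReal (Hd γ n x) := by
  set μγ : Measure ℝ := (ENNReal.ofReal γ)⁻¹ • volume.restrict (Set.Ioc 0 γ) with hμγ
  haveI : IsProbabilityMeasure μγ := by
    constructor
    rw [hμγ]
    simp only [Measure.smul_apply, Measure.restrict_apply MeasurableSet.univ,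
      Set.univ_inter, Real.volume_Ioc, sub_zero, smul_eq_mul]
    exact ENNReal.inv_mul_cancel (by simp [hγ]) ENNReal.ofReal_ne_top
  induction n, hn using Nat.le_induction with
  | base =>
    have hfu : (fun x : Fin 1 → ℝ => ∏ i, x i) = ⇑(MeasurableEquiv.funUnique (Fin 1) ℝ) := by
      funext x
      rw [Fin.prod_univ_one]
      rfl
    rw [hfu]
    erw [(measurePreserving_funUnique μγ (Fin 1)).map_eq]
    have hdens : (fun x => ENNReal.ofReal (Hd γ 1 x))
        = (Set.Ioo 0 γ).indicator (fun _ => ENNReal.ofReal γ⁻¹) := by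
      funext x
      unfold Hd
      by_cases hx : x ∈ Set.Ioo 0 (γ ^ 1)
      · rw [if_pos hx, Set.indicator_of_mem (by simpa using hx)]
        norm_num
      · rw [if_neg hx, Set.indicator_of_notMem (by simpa using hx)]
        simp
    rw [hdens, withDensity_indicator measurableSet_Ioo, withDensity_const,
      Measure.restrict_congr_set Ioo_ae_eq_Ioc, ENNReal.ofReal_inv_of_pos hγ]
  | succ n hn IH =>
    have hprodmeas : Measurable (fun x : Fin n → ℝ => ∏ i, x i) := by
      exact Finset.measurable_prod _ (fun i _ => measurable_pi_apply i)
    have hequiv := measurePreserving_piFinSuccAbove (fun _ : Fin (n+1) => μγ) 0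
    have hcomp : (fun x : Fin (n+1) → ℝ => ∏ i, x i)
        = ((fun q : ℝ × ℝ => q.1 * q.2) ∘
            Prod.map id (fun x : Fin n → ℝ => ∏ i, x i)) ∘
          ⇑(MeasurableEquiv.piFinSuccAbove (fun _ => ℝ) 0) := by
      funext x
      simp [MeasurableEquiv.piFinSuccAbove, Fin.prod_univ_succ, Fin.insertNthEquiv]
      exact Or.inl rfl
    rw [hcomp, ← Measure.map_map (by fun_prop) (MeasurableEquiv.measurable _),
      hequiv.map_eq,
      ← Measure.map_map (show Measurable (fun q : ℝ × ℝ => q.1 * q.2) from measurable_fst.mul measurable_snd)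
        (measurable_id.prodMap hprodmeas),
      ← Measure.map_prod_map _ _ measurable_id hprodmeas, Measure.map_id, IH,
      Auniform γ hγ (fun x => ENNReal.ofReal (Hd γ n x))
        (show Measurable fun x => ENNReal.ofReal (Hd γ n x) from
          ENNReal.measurable_ofReal.comp (Hd_measurable γ n))]
    congr 1
    funext x
    exact densityId γ hγ n hn x


end Aux

/-- The pushforward of the n-fold product of the uniform measure on
(0, γ] under the product map is absolutely continuous w.r.t. Lebesgue measure,
with density h(x) = (1/(γⁿ (n−1)!)) · (log(γⁿ/x))^(n−1) on (0, γⁿ) and 0 elsewhere. -/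
theorem product_of_uniforms_density (γ : ℝ) (hγ : 0 < γ) (n : ℕ) (hn : 1 ≤ n)
    (μ : Measure ℝ) (hμ : μ = (ENNReal.ofReal γ)⁻¹ • volume.restrict (Set.Ioc 0 γ))
    (h : ℝ → ℝ)
    (hh : ∀ x : ℝ, h x = if x ∈ Set.Ioo 0 (γ ^ n) then
        (1 / (γ ^ n * (Nat.factorial (n - 1) : ℝ))) * (Real.log (γ ^ n / x)) ^ (n - 1)
      else 0) :
    Measure.map (fun x : Fin n → ℝ => ∏ i, x i) (Measure.pi fun _ => μ)
        = volume.withDensity (fun x => ENNReal.ofReal (h x)) ∧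
    Measure.map (fun x : Fin n → ℝ => ∏ i, x i) (Measure.pi fun _ => μ) ≪ volume := by
  have hH : h = Hd γ n := funext fun x => (hh x).trans rfl
  subst hμ
  rw [hH]
  refine ⟨mainInd γ hγ n hn, ?_⟩
  rw [mainInd γ hγ n hn]
  exact withDensity_absolutelyContinuous _ _
end
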